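/- Let p > 0 and let T^p : ℝ → ℝ be defined by T^p(x) = −1 if |x| < p and T^p(x) = 0 if |x| ≥ p; the sharpness of the local minimum of T^p at 0 (the maximal variation sup_x |T^p(x) − T^p(0)|) equals 1. Then for every σ > 0, the Gaussian smoothing T^p_σ has strictly smaller variation: for all x, y ∈ ℝ, |T^p_σ(x) − T^p_σ(y)| ≤ 2Φ(p/σ) − 1 < 1, where Φ is the standard normal CDF. In particular, Gaussian Loss Smoothing strictly reduces the sharpness of the local minimum of T^p. -/

import Mathlib

open MeasureTheory ProbabilityTheory Real

/-- The Gaussian smoothing `L_σ(θ) = E_{ε ~ N(0,σ²)}[L (θ + ε)]` of a loss `L`. -/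
noncomputable def gaussianSmoothing (L : ℝ → ℝ) (σ θ : ℝ) : ℝ :=
  ∫ ε, L (θ + ε) ∂(gaussianReal 0 ⟨σ ^ 2, sq_nonneg σ⟩)

/-- The standard normal density `p(t) = (1/√(2π)) · exp(−t²/2)`. -/
noncomputable def stdGaussianPDF (t : ℝ) : ℝ :=
  (Real.sqrt (2 * Real.pi))⁻¹ * Real.exp (-t ^ 2 / 2)

/-- The standard normal CDF `Φ(x) = ∫_{−∞}^{x} p(t) dt`. -/
noncomputable def stdGaussianCDF (x : ℝ) : ℝ :=
  ∫ t in Set.Iic x, stdGaussianPDF t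

/-- The pit function `T^p`: value `−1` on `(−p, p)`, value `0` outside. -/
noncomputable def pitFun (p x : ℝ) : ℝ := if |x| < p then -1 else 0

lemma stdGaussianPDF_pos (t : ℝ) : 0 < stdGaussianPDF t := by
  unfold stdGaussianPDF
  positivity

lemma stdGaussianPDF_eq : stdGaussianPDF =
    fun t => (Real.sqrt (2 * Real.pi))⁻¹ * Real.exp (-(1/2) * t ^ 2) := by
  funext t; unfold stdGaussianPDF; congr 1; ring_nf

lemma continuous_stdGaussianPDF : Continuous stdGaussianPDF := by
  rw [stdGaussianPDF_eq]; fun_prop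

lemma integrable_stdGaussianPDF : Integrable stdGaussianPDF := by
  rw [stdGaussianPDF_eq]
  exact (integrable_exp_neg_mul_sq (by norm_num)).const_mul _

lemma integral_stdGaussianPDF : ∫ t, stdGaussianPDF t = 1 := by
  rw [stdGaussianPDF_eq, MeasureTheory.integral_const_mul, integral_gaussian]
  rw [show Real.pi / (1/2) = 2 * Real.pi by ring]
  exact inv_mul_cancel₀ (Real.sqrt_ne_zero'.2 (by positivity))

lemma stdGaussianCDF_sub (a b : ℝ) :
    stdGaussianCDF b - stdGaussianCDF a = ∫ t in a..b, stdGaussianPDF t :=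
  intervalIntegral.integral_Iic_sub_Iic integrable_stdGaussianPDF.integrableOn
    integrable_stdGaussianPDF.integrableOn

lemma stdGaussianCDF_mono : Monotone stdGaussianCDF := by
  intro a b hab
  rw [← sub_nonneg, stdGaussianCDF_sub]
  exact intervalIntegral.integral_nonneg hab (fun t _ => (stdGaussianPDF_pos t).le)

lemma stdGaussianCDF_neg (x : ℝ) : stdGaussianCDF (-x) = 1 - stdGaussianCDF x := by
  have heven : ∀ t : ℝ, stdGaussianPDF (-t) = stdGaussianPDF t := by
    intro t; unfold stdGaussianPDF; rw [neg_pow]; ring_nf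
  have h1 : stdGaussianCDF (-x) = ∫ t in Set.Ioi x, stdGaussianPDF t := by
    unfold stdGaussianCDF
    rw [← integral_comp_neg_Ioi]
    simp_rw [heven]
  have h2 : stdGaussianCDF x + ∫ t in Set.Ioi x, stdGaussianPDF t = 1 := by
    unfold stdGaussianCDF
    rw [← Set.compl_Iic]
    exact (integral_add_compl measurableSet_Iic integrable_stdGaussianPDF).trans
      integral_stdGaussianPDF
  linarith [h1, h2]

lemma stdGaussianCDF_lt_one (x : ℝ) : stdGaussianCDF x < 1 := by
  have h1 : stdGaussianCDF (-(-x)) = 1 - stdGaussianCDF (-x) := stdGaussianCDF_neg (-x)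
  have hpos : 0 < stdGaussianCDF (-x) := by
    unfold stdGaussianCDF
    rw [setIntegral_pos_iff_support_of_nonneg_ae
      (ae_of_all _ (fun t => (stdGaussianPDF_pos t).le)) integrable_stdGaussianPDF.integrableOn]
    have : Function.support stdGaussianPDF = Set.univ :=
      Set.eq_univ_of_forall fun t => (stdGaussianPDF_pos t).ne'
    rw [this, Set.univ_inter]
    simp [Real.volume_Iic]
  rw [neg_neg] at h1
  linarith

lemma hasDerivAt_stdGaussianCDF (x : ℝ) :
    HasDerivAt stdGaussianCDF (stdGaussianPDF x) x := by
  have hfun : stdGaussianCDF =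
      fun y => stdGaussianCDF 0 + ∫ t in (0:ℝ)..y, stdGaussianPDF t := by
    funext y
    rw [← stdGaussianCDF_sub]; ring
  have h : HasDerivAt (fun y => stdGaussianCDF 0 + ∫ t in (0:ℝ)..y, stdGaussianPDF t)
      (stdGaussianPDF x) x := by
    refine HasDerivAt.const_add _ ?_
    exact intervalIntegral.integral_hasDerivAt_right
      integrable_stdGaussianPDF.intervalIntegrable
      continuous_stdGaussianPDF.stronglyMeasurable.stronglyMeasurableAtFilter
      continuous_stdGaussianPDF.continuousAt
  rwa [← hfun] at h

lemma centered_max {q : ℝ} (hq : 0 < q) (c : ℝ) :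
    stdGaussianCDF (c + q) - stdGaussianCDF (c - q) ≤ 2 * stdGaussianCDF q - 1 := by
  set g : ℝ → ℝ := fun c => stdGaussianCDF (c + q) - stdGaussianCDF (c - q) with hg_def
  have hg : ∀ c : ℝ, HasDerivAt g (stdGaussianPDF (c + q) - stdGaussianPDF (c - q)) c := by
    intro c
    have h1 : HasDerivAt (fun c : ℝ => stdGaussianCDF (c + q)) (stdGaussianPDF (c + q)) c := by
      simpa [Function.comp_def] using (hasDerivAt_stdGaussianCDF (c + q)).comp c ((hasDerivAt_id c).add_const q)
    have h2 : HasDerivAt (fun c : ℝ => stdGaussianCDF (c - q)) (stdGaussianPDF (c - q)) c := by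
      simpa [Function.comp_def] using (hasDerivAt_stdGaussianCDF (c - q)).comp c ((hasDerivAt_id c).sub_const q)
    exact h1.sub h2
  have hcont : Continuous g := by
    have : Differentiable ℝ g := fun c => (hg c).differentiableAt
    exact this.continuous
  have hanti : AntitoneOn g (Set.Ici 0) := by
    refine antitoneOn_of_deriv_nonpos (convex_Ici 0) hcont.continuousOn
      (fun x _ => (hg x).differentiableAt.differentiableWithinAt) ?_
    intro x hx
    rw [interior_Ici, Set.mem_Ioi] at hx
    rw [(hg x).deriv]
    have : stdGaussianPDF (x + q) ≤ stdGaussianPDF (x - q) := by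
      unfold stdGaussianPDF
      have : Real.exp (-(x+q)^2/2) ≤ Real.exp (-(x-q)^2/2) := by
        apply Real.exp_le_exp.2; nlinarith
      have h0 : (0:ℝ) ≤ (Real.sqrt (2 * Real.pi))⁻¹ := by positivity
      exact mul_le_mul_of_nonneg_left this h0
    linarith
  have heven : ∀ c : ℝ, g (-c) = g c := by
    intro c
    simp only [hg_def]
    have e1 : -c + q = -(c - q) := by ring
    have e2 : -c - q = -(c + q) := by ring
    rw [e1, e2, stdGaussianCDF_neg, stdGaussianCDF_neg]
    ring
  have hg0 : g 0 = 2 * stdGaussianCDF q - 1 := by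
    simp only [hg_def, zero_add, zero_sub, stdGaussianCDF_neg]
    ring
  rw [← hg0]
  show g c ≤ g 0
  rcases le_total 0 c with hc | hc
  · exact hanti (Set.self_mem_Ici) hc hc
  · rw [← heven c]
    exact hanti (Set.self_mem_Ici) (by simpa using hc) (by simpa using hc)

lemma smoothing_eq (p : ℝ) (hp : 0 < p) {σ : ℝ} (hσ : 0 < σ) (θ : ℝ) :
    gaussianSmoothing (pitFun p) σ θ =
      -(stdGaussianCDF ((p - θ)/σ) - stdGaussianCDF ((-p - θ)/σ)) := by
  have hv : (⟨σ^2, sq_nonneg σ⟩ : NNReal) ≠ 0 := by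
    intro h
    have h2 : σ^2 = 0 := congrArg Subtype.val h
    nlinarith [pow_pos hσ 2]
  have hind : (fun ε => pitFun p (θ + ε)) =
      (Set.Ioo (-p - θ) (p - θ)).indicator (fun _ => (-1:ℝ)) := by
    funext ε
    unfold pitFun
    rw [Set.indicator_apply,
      if_congr (show |θ + ε| < p ↔ ε ∈ Set.Ioo (-p - θ) (p - θ) by
        rw [Set.mem_Ioo, abs_lt]
        constructor <;> intro h <;> exact ⟨by linarith [h.1, h.2], by linarith [h.1, h.2]⟩)
      rfl rfl]
  unfold gaussianSmoothing
  rw [hind, integral_indicator_const _ measurableSet_Ioo,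
    measureReal_def, gaussianReal_apply_eq_integral 0 hv,
    ENNReal.toReal_ofReal (setIntegral_nonneg measurableSet_Ioo
      fun x _ => gaussianPDFReal_nonneg 0 ⟨σ^2, sq_nonneg σ⟩ x),
    smul_eq_mul, mul_neg_one, neg_inj]
  have hab : (-p - θ) ≤ (p - θ) := by linarith
  have hpdf : ∀ x : ℝ, gaussianPDFReal 0 ⟨σ^2, sq_nonneg σ⟩ x = σ⁻¹ * stdGaussianPDF (x/σ) := by
    intro x
    unfold gaussianPDFReal stdGaussianPDF
    show (√(2 * π * σ^2))⁻¹ * rexp (-(x - 0) ^ 2 / (2 * σ^2)) =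
      σ⁻¹ * ((√(2 * π))⁻¹ * rexp (-(x/σ) ^ 2 / 2))
    rw [Real.sqrt_mul (by positivity) (σ^2), Real.sqrt_sq hσ.le,
      show -(x - 0)^2 / (2 * σ^2) = -(x/σ)^2/2 by rw [div_pow]; field_simp; ring,
      mul_inv]
    ring
  rw [stdGaussianCDF_sub, ← integral_Ioc_eq_integral_Ioo,
    ← intervalIntegral.integral_of_le hab]
  simp_rw [hpdf]
  rw [intervalIntegral.integral_const_mul,
    intervalIntegral.integral_comp_div _ hσ.ne',
    smul_eq_mul, ← mul_assoc, inv_mul_cancel₀ hσ.ne', one_mul]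

/-- The sharpness of the local minimum of `T^p` at `0`
(the maximal variation `sup_x |T^p(x) − T^p(0)|`) equals `1`, while for every `σ > 0`
the Gaussian smoothing `T^p_σ` has strictly smaller variation: for all `x, y`,
`|T^p_σ(x) − T^p_σ(y)| ≤ 2Φ(p/σ) − 1 < 1`. Hence Gaussian Loss Smoothing strictly
reduces the sharpness of the local minimum of `T^p`. -/
theorem pit_smoothing_reduces_sharpness (p : ℝ) (hp : 0 < p) :
    (⨆ x : ℝ, |pitFun p x - pitFun p 0|) = 1 ∧
    ∀ σ : ℝ, 0 < σ →
      ((∀ x y : ℝ,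
          |gaussianSmoothing (pitFun p) σ x - gaussianSmoothing (pitFun p) σ y| ≤
            2 * stdGaussianCDF (p / σ) - 1) ∧
        2 * stdGaussianCDF (p / σ) - 1 < 1) := by
  constructor
  · have h0 : pitFun p 0 = -1 := by simp [pitFun, hp]
    have key : ∀ x, |pitFun p x - pitFun p 0| ≤ 1 := by
      intro x; rw [h0]; unfold pitFun; split_ifs <;> norm_num
    refine le_antisymm (ciSup_le key) ?_
    have hpp : |pitFun p p - pitFun p 0| = 1 := by
      rw [h0]; unfold pitFun
      rw [if_neg (by simp [abs_of_pos hp])]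
      norm_num
    have hbdd : BddAbove (Set.range fun x : ℝ => |pitFun p x - pitFun p 0|) :=
      ⟨1, by rintro y ⟨x, rfl⟩; exact key x⟩
    calc (1:ℝ) = |pitFun p p - pitFun p 0| := hpp.symm
      _ ≤ ⨆ x, |pitFun p x - pitFun p 0| := le_ciSup hbdd p
  · intro σ hσ
    have hq : 0 < p / σ := div_pos hp hσ
    have hΦ1 : stdGaussianCDF (p/σ) < 1 := stdGaussianCDF_lt_one _
    refine ⟨?_, by linarith⟩
    intro x y
    have hform : ∀ θ : ℝ, gaussianSmoothing (pitFun p) σ θ =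
        -(stdGaussianCDF (-θ/σ + p/σ) - stdGaussianCDF (-θ/σ - p/σ)) := by
      intro θ
      rw [smoothing_eq p hp hσ θ,
        show (p - θ)/σ = -θ/σ + p/σ by ring,
        show (-p - θ)/σ = -θ/σ - p/σ by ring]
    have hbound : ∀ θ : ℝ, 0 ≤ stdGaussianCDF (-θ/σ + p/σ) - stdGaussianCDF (-θ/σ - p/σ) ∧
        stdGaussianCDF (-θ/σ + p/σ) - stdGaussianCDF (-θ/σ - p/σ) ≤
          2 * stdGaussianCDF (p/σ) - 1 := by
      intro θ
      refine ⟨?_, centered_max hq (-θ/σ)⟩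
      have := stdGaussianCDF_mono (show -θ/σ - p/σ ≤ -θ/σ + p/σ by linarith)
      linarith
    obtain ⟨h1x, h2x⟩ := hbound x
    obtain ⟨h1y, h2y⟩ := hbound y
    rw [hform x, hform y, abs_sub_le_iff]
    constructor <;> linarith
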